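/- Any smooth function y(x) defined implicitly by (y + Q(x))^2 + P(x) = 0, where Q is an arbitrary real quadratic polynomial and P(x) = a(x - r)(x - s)^3 with a ≠ 0 and r ≠ s, and y(x) + Q(x) ≠ 0, satisfies the 7th order ODE E[y] = 0. -/

import Mathlib

noncomputable def Eode (y : ℝ → ℝ) (s : Set ℝ) (x : ℝ) : ℝ :=
  10 * (iteratedDerivWithin 3 y s x) ^ 3 * iteratedDerivWithin 7 y s x
  - 70 * (iteratedDerivWithin 3 y s x) ^ 2 * iteratedDerivWithin 4 y s x *
      iteratedDerivWithin 6 y s x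
  - 49 * (iteratedDerivWithin 3 y s x) ^ 2 * (iteratedDerivWithin 5 y s x) ^ 2
  + 280 * iteratedDerivWithin 3 y s x * (iteratedDerivWithin 4 y s x) ^ 2 *
      iteratedDerivWithin 5 y s x
  - 175 * (iteratedDerivWithin 4 y s x) ^ 4

set_option maxHeartbeats 4000000 in
lemma alg18 (a z w t u1 u2 u3 u4 u5 u6 u7 : ℝ) (ht : t ≠ 0)
    (h0 : t ^ 2 + a * ((z) * (w) ^ 3) = 0)
    (h1 : 2*(t*u1) + a*(w^3 + 3*(z*w^2)) = 0)
    (h2 : 2*(t*u2) + 2*(u1*u1) + a*(6*w^2 + 6*(z*w)) = 0)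
    (h3 : 2*(t*u3) + 6*(u1*u2) + a*(18*w + 6*z) = 0)
    (h4 : 2*(t*u4) + 8*(u1*u3) + 6*(u2*u2) + 24*a = 0)
    (h5 : 2*(t*u5) + 10*(u1*u4) + 20*(u2*u3) = 0)
    (h6 : 2*(t*u6) + 12*(u1*u5) + 30*(u2*u4) + 20*(u3*u3) = 0)
    (h7 : 2*(t*u7) + 14*(u1*u6) + 42*(u2*u5) + 70*(u3*u4) = 0)
    : 10 * u3 ^ 3 * u7 - 70 * u3 ^ 2 * u4 * u6 - 49 * u3 ^ 2 * u5 ^ 2 + 280 * u3 * u4 ^ 2 * u5 - 175 * u4 ^ 4 = 0 := by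
  have ht2 : a * (z * w ^ 3) ≠ 0 := by
    intro hc
    apply pow_ne_zero 2 ht
    linear_combination h0 - hc
  have hD : (2*(a*z*w^3)) ≠ 0 := by
    intro hc; apply ht2; linarith [hc]
  have e1 : (2*(a*z*w^3))^1 * u1 = ((a*w^3 + 3*a*z*w^2)) * t := by
    linear_combination (-(t*(2*(a*z*w^3))^0))*h1 + (2*(2*(a*z*w^3))^0*u1)*h0
  have e2 : (2*(a*z*w^3))^3 * u2 = ((-2*a^3*z*w^9 + 12*a^3*z^2*w^8 + 6*a^3*z^3*w^7)) * t := by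
    linear_combination (-(t*(2*(a*z*w^3))^2))*h2 + (2*(2*(a*z*w^3))^2*u2 + t*(2*((a*w^3 + 3*a*z*w^2))*((a*w^3 + 3*a*z*w^2))))*h0 + (2*(t*(2*(a*z*w^3))^1*u1))*e1 + (2*(t^2*((a*w^3 + 3*a*z*w^2))))*e1
  have e3 : (2*(a*z*w^3))^5 * u3 = ((12*a^5*z^2*w^15 - 36*a^5*z^3*w^14 + 36*a^5*z^4*w^13 - 12*a^5*z^5*w^12)) * t := by
    linear_combination (-(t*(2*(a*z*w^3))^4))*h3 + (2*(2*(a*z*w^3))^4*u3 + t*(3*((a*w^3 + 3*a*z*w^2))*((-2*a^3*z*w^9 + 12*a^3*z^2*w^8 + 6*a^3*z^3*w^7)) + 3*((-2*a^3*z*w^9 + 12*a^3*z^2*w^8 + 6*a^3*z^3*w^7))*((a*w^3 + 3*a*z*w^2))))*h0 + (3*(t*(2*(a*z*w^3))^3*u2))*e1 + (3*(t^2*((a*w^3 + 3*a*z*w^2))))*e2 + (3*(t*(2*(a*z*w^3))^1*u1))*e2 + (3*(t^2*((-2*a^3*z*w^9 + 12*a^3*z^2*w^8 + 6*a^3*z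^3*w^7))))*e1
  have e4 : (2*(a*z*w^3))^7 * u4 = ((-120*a^7*z^3*w^21 + 288*a^7*z^4*w^20 - 144*a^7*z^5*w^19 - 96*a^7*z^6*w^18 + 72*a^7*z^7*w^17)) * t := by
    linear_combination (-(t*(2*(a*z*w^3))^6))*h4 + (2*(2*(a*z*w^3))^6*u4 + t*(4*((a*w^3 + 3*a*z*w^2))*((12*a^5*z^2*w^15 - 36*a^5*z^3*w^14 + 36*a^5*z^4*w^13 - 12*a^5*z^5*w^12)) + 6*((-2*a^3*z*w^9 + 12*a^3*z^2*w^8 + 6*a^3*z^3*w^7))*((-2*a^3*z*w^9 + 12*a^3*z^2*w^8 + 6*a^3*z^3*w^7)) + 4*((12*a^5*z^2*w^15 - 36*a^5*z^3*w^14 + 36*a^5*z^4*w^13 - 12*a^5*z^5*w^12))*((a*w^3 + 3*a*z*w^2))))*h0 + (4*(t*(2*(a*z*w^3))^5*u3))*e1 + (4*(t^2*((a*w^3 + 3*a*z*w^2))))*e3 + (6*(t*(2*(a*z*w^3))^3*u2))*e2 + (6*(t^2*((-2*a^3*z*w^9 + 12*a^3*z^2*w^8 + 6*a^3*z^3*w^7))))*e2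 + (4*(t*(2*(a*z*w^3))^1*u1))*e3 + (4*(t^2*((12*a^5*z^2*w^15 - 36*a^5*z^3*w^14 + 36*a^5*z^4*w^13 - 12*a^5*z^5*w^12))))*e1
  have e5 : (2*(a*z*w^3))^9 * u5 = ((1680*a^9*z^4*w^27 - 3600*a^9*z^5*w^26 + 1440*a^9*z^6*w^25 + 480*a^9*z^7*w^24 + 720*a^9*z^8*w^23 - 720*a^9*z^9*w^22)) * t := by
    linear_combination (-(t*(2*(a*z*w^3))^8))*h5 + (2*(2*(a*z*w^3))^8*u5 + t*(5*((a*w^3 + 3*a*z*w^2))*((-120*a^7*z^3*w^21 + 288*a^7*z^4*w^20 - 144*a^7*z^5*w^19 - 96*a^7*z^6*w^18 + 72*a^7*z^7*w^17)) + 10*((-2*a^3*z*w^9 + 12*a^3*z^2*w^8 + 6*a^3*z^3*w^7))*((12*a^5*z^2*w^15 - 36*a^5*z^3*w^14 + 36*a^5*z^4*w^13 - 12*a^5*z^5*w^12)) + 10*((12*a^5*z^2*w^15 - 36*a^5*z^3*w^14 + 36*a^5*z^4*w^13 - 12*a^5*z^5*w^12))*((-2*a^3*z*w^9 + 12*a^3*z^2*w^8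 + 6*a^3*z^3*w^7)) + 5*((-120*a^7*z^3*w^21 + 288*a^7*z^4*w^20 - 144*a^7*z^5*w^19 - 96*a^7*z^6*w^18 + 72*a^7*z^7*w^17))*((a*w^3 + 3*a*z*w^2))))*h0 + (5*(t*(2*(a*z*w^3))^7*u4))*e1 + (5*(t^2*((a*w^3 + 3*a*z*w^2))))*e4 + (10*(t*(2*(a*z*w^3))^5*u3))*e2 + (10*(t^2*((-2*a^3*z*w^9 + 12*a^3*z^2*w^8 + 6*a^3*z^3*w^7))))*e3 + (10*(t*(2*(a*z*w^3))^3*u2))*e3 + (10*(t^2*((12*a^5*z^2*w^15 - 36*a^5*z^3*w^14 + 36*a^5*z^4*w^13 - 12*a^5*z^5*w^12))))*e2 + (5*(t*(2*(a*z*w^3))^1*u1))*e4 + (5*(t^2*((-120*a^7*z^3*w^21 + 288*a^7*z^4*w^20 - 144*a^7*z^5*w^19 - 96*a^7*z^6*w^18 + 72*a^7*z^7*w^17))))*e1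
  have e6 : (2*(a*z*w^3))^11 * u6 = ((-30240*a^11*z^5*w^33 + 60480*a^11*z^6*w^32 - 21600*a^11*z^7*w^31 - 5760*a^11*z^8*w^30 - 4320*a^11*z^9*w^29 - 8640*a^11*z^10*w^28 + 10080*a^11*z^11*w^27)) * t := by
    linear_combination (-(t*(2*(a*z*w^3))^10))*h6 + (2*(2*(a*z*w^3))^10*u6 + t*(6*((a*w^3 + 3*a*z*w^2))*((1680*a^9*z^4*w^27 - 3600*a^9*z^5*w^26 + 1440*a^9*z^6*w^25 + 480*a^9*z^7*w^24 + 720*a^9*z^8*w^23 - 720*a^9*z^9*w^22)) + 15*((-2*a^3*z*w^9 + 12*a^3*z^2*w^8 + 6*a^3*z^3*w^7))*((-120*a^7*z^3*w^21 + 288*a^7*z^4*w^20 - 144*a^7*z^5*w^19 - 96*a^7*z^6*w^18 + 72*a^7*z^7*w^17)) + 20*((12*a^5*z^2*w^15 - 36*a^5*z^3*w^14 + 36*a^5*z^4*w^13 - 12*a^5*z^5*w^12))*((12*a^5*z^2*w^15 - 36*a^5*z^3*w^14 + 36*a^5*z^4*w^13 - 12*a^5*z^5*w^12)) + 15*((-120*a^7*z^3*w^21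 + 288*a^7*z^4*w^20 - 144*a^7*z^5*w^19 - 96*a^7*z^6*w^18 + 72*a^7*z^7*w^17))*((-2*a^3*z*w^9 + 12*a^3*z^2*w^8 + 6*a^3*z^3*w^7)) + 6*((1680*a^9*z^4*w^27 - 3600*a^9*z^5*w^26 + 1440*a^9*z^6*w^25 + 480*a^9*z^7*w^24 + 720*a^9*z^8*w^23 - 720*a^9*z^9*w^22))*((a*w^3 + 3*a*z*w^2))))*h0 + (6*(t*(2*(a*z*w^3))^9*u5))*e1 + (6*(t^2*((a*w^3 + 3*a*z*w^2))))*e5 + (15*(t*(2*(a*z*w^3))^7*u4))*e2 + (15*(t^2*((-2*a^3*z*w^9 + 12*a^3*z^2*w^8 + 6*a^3*z^3*w^7))))*e4 + (20*(t*(2*(a*z*w^3))^5*u3))*e3 + (20*(t^2*((12*a^5*z^2*w^15 - 36*a^5*z^3*w^14 + 36*a^5*z^4*w^13 - 12*a^5*z^5*w^12))))*e3 + (15*(t*(2*(a*z*w^3))^3*u2))*e4 + (15*(t^2*((-120*a^7*z^3*w^21 + 288*a^7*z^4*w^20 - 144*a^7*z^5*w^19 - 96*a^7*z^6*w^18 +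 72*a^7*z^7*w^17))))*e2 + (6*(t*(2*(a*z*w^3))^1*u1))*e5 + (6*(t^2*((1680*a^9*z^4*w^27 - 3600*a^9*z^5*w^26 + 1440*a^9*z^6*w^25 + 480*a^9*z^7*w^24 + 720*a^9*z^8*w^23 - 720*a^9*z^9*w^22))))*e1
  have e7 : (2*(a*z*w^3))^13 * u7 = ((665280*a^13*z^6*w^39 - 1270080*a^13*z^7*w^38 + 423360*a^13*z^8*w^37 + 100800*a^13*z^9*w^36 + 60480*a^13*z^10*w^35 + 60480*a^13*z^11*w^34 + 141120*a^13*z^12*w^33 - 181440*a^13*z^13*w^32)) * t := by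
    linear_combination (-(t*(2*(a*z*w^3))^12))*h7 + (2*(2*(a*z*w^3))^12*u7 + t*(7*((a*w^3 + 3*a*z*w^2))*((-30240*a^11*z^5*w^33 + 60480*a^11*z^6*w^32 - 21600*a^11*z^7*w^31 - 5760*a^11*z^8*w^30 - 4320*a^11*z^9*w^29 - 8640*a^11*z^10*w^28 + 10080*a^11*z^11*w^27)) + 21*((-2*a^3*z*w^9 + 12*a^3*z^2*w^8 + 6*a^3*z^3*w^7))*((1680*a^9*z^4*w^27 - 3600*a^9*z^5*w^26 + 1440*a^9*z^6*w^25 + 480*a^9*z^7*w^24 + 720*a^9*z^8*w^23 - 720*a^9*z^9*w^22)) + 35*((12*a^5*z^2*w^15 - 36*a^5*z^3*w^14 + 36*a^5*z^4*w^13 - 12*a^5*z^5*w^12))*((-120*a^7*z^3*w^21 + 288*a^7*z^4*w^20 - 144*a^7*z^5*w^19 - 96*a^7*z^6*w^18 + 72*a^7*z^7*w^17)) + 35*((-120*a^7*z^3*w^21 + 288*a^7*z^4*w^20 - 144*a^7*z^5*w^19 - 96*a^7*z^6*w^18 + 72*a^7*z^7*w^17))*((12*a^5*z^2*w^15 - 36*a^5*z^3*w^14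 + 36*a^5*z^4*w^13 - 12*a^5*z^5*w^12)) + 21*((1680*a^9*z^4*w^27 - 3600*a^9*z^5*w^26 + 1440*a^9*z^6*w^25 + 480*a^9*z^7*w^24 + 720*a^9*z^8*w^23 - 720*a^9*z^9*w^22))*((-2*a^3*z*w^9 + 12*a^3*z^2*w^8 + 6*a^3*z^3*w^7)) + 7*((-30240*a^11*z^5*w^33 + 60480*a^11*z^6*w^32 - 21600*a^11*z^7*w^31 - 5760*a^11*z^8*w^30 - 4320*a^11*z^9*w^29 - 8640*a^11*z^10*w^28 + 10080*a^11*z^11*w^27))*((a*w^3 + 3*a*z*w^2))))*h0 + (7*(t*(2*(a*z*w^3))^11*u6))*e1 + (7*(t^2*((a*w^3 + 3*a*z*w^2))))*e6 + (21*(t*(2*(a*z*w^3))^9*u5))*e2 + (21*(t^2*((-2*a^3*z*w^9 + 12*a^3*z^2*w^8 + 6*a^3*z^3*w^7))))*e5 + (35*(t*(2*(a*z*w^3))^7*u4))*e3 + (35*(t^2*((12*a^5*z^2*w^15 - 36*a^5*z^3*w^14 + 36*a^5*z^4*w^13 - 12*a^5*z^5*w^12))))*e4 + (35*(t*(2*(a*z*w^3))^5*u3))*e4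 + (35*(t^2*((-120*a^7*z^3*w^21 + 288*a^7*z^4*w^20 - 144*a^7*z^5*w^19 - 96*a^7*z^6*w^18 + 72*a^7*z^7*w^17))))*e3 + (21*(t*(2*(a*z*w^3))^3*u2))*e5 + (21*(t^2*((1680*a^9*z^4*w^27 - 3600*a^9*z^5*w^26 + 1440*a^9*z^6*w^25 + 480*a^9*z^7*w^24 + 720*a^9*z^8*w^23 - 720*a^9*z^9*w^22))))*e2 + (7*(t*(2*(a*z*w^3))^1*u1))*e6 + (7*(t^2*((-30240*a^11*z^5*w^33 + 60480*a^11*z^6*w^32 - 21600*a^11*z^7*w^31 - 5760*a^11*z^8*w^30 - 4320*a^11*z^9*w^29 - 8640*a^11*z^10*w^28 + 10080*a^11*z^11*w^27))))*e1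
  have t1 : ((2*(a*z*w^3))^5*u3)^3 * ((2*(a*z*w^3))^13*u7) = (((12*a^5*z^2*w^15 - 36*a^5*z^3*w^14 + 36*a^5*z^4*w^13 - 12*a^5*z^5*w^12))*t)^3 * (((665280*a^13*z^6*w^39 - 1270080*a^13*z^7*w^38 + 423360*a^13*z^8*w^37 + 100800*a^13*z^9*w^36 + 60480*a^13*z^10*w^35 + 60480*a^13*z^11*w^34 + 141120*a^13*z^12*w^33 - 181440*a^13*z^13*w^32))*t) := by rw [e3, e7]
  have t2 : ((2*(a*z*w^3))^5*u3)^2 * (((2*(a*z*w^3))^7*u4) * ((2*(a*z*w^3))^11*u6)) = (((12*a^5*z^2*w^15 - 36*a^5*z^3*w^14 + 36*a^5*z^4*w^13 - 12*a^5*z^5*w^12))*t)^2 * ((((-120*a^7*z^3*w^21 + 288*a^7*z^4*w^20 - 144*a^7*z^5*w^19 - 96*a^7*z^6*w^18 + 72*a^7*z^7*w^17))*t) * (((-30240*a^11*z^5*w^33 + 60480*a^11*z^6*w^32 - 21600*a^11*z^7*w^31 - 5760*a^11*z^8*w^30 - 4320*a^11*z^9*w^29 - 8640*a^11*z^10*w^28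 + 10080*a^11*z^11*w^27))*t)) := by rw [e3, e4, e6]
  have t3 : ((2*(a*z*w^3))^5*u3)^2 * ((2*(a*z*w^3))^9*u5)^2 = (((12*a^5*z^2*w^15 - 36*a^5*z^3*w^14 + 36*a^5*z^4*w^13 - 12*a^5*z^5*w^12))*t)^2 * (((1680*a^9*z^4*w^27 - 3600*a^9*z^5*w^26 + 1440*a^9*z^6*w^25 + 480*a^9*z^7*w^24 + 720*a^9*z^8*w^23 - 720*a^9*z^9*w^22))*t)^2 := by rw [e3, e5]
  have t4 : ((2*(a*z*w^3))^5*u3) * (((2*(a*z*w^3))^7*u4)^2 * ((2*(a*z*w^3))^9*u5)) = (((12*a^5*z^2*w^15 - 36*a^5*z^3*w^14 + 36*a^5*z^4*w^13 - 12*a^5*z^5*w^12))*t) * ((((-120*a^7*z^3*w^21 + 288*a^7*z^4*w^20 - 144*a^7*z^5*w^19 - 96*a^7*z^6*w^18 + 72*a^7*z^7*w^17))*t)^2 * (((1680*a^9*z^4*w^27 - 3600*a^9*z^5*w^26 + 1440*a^9*z^6*w^25 + 480*a^9*z^7*w^24 + 720*a^9*z^8*w^23 - 720*a^9*z^9*w^22))*t))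 := by rw [e3, e4, e5]
  have t5 : ((2*(a*z*w^3))^7*u4)^4 = (((-120*a^7*z^3*w^21 + 288*a^7*z^4*w^20 - 144*a^7*z^5*w^19 - 96*a^7*z^6*w^18 + 72*a^7*z^7*w^17))*t)^4 := by rw [e4]
  have key : (2*(a*z*w^3))^28 * (10 * u3 ^ 3 * u7 - 70 * u3 ^ 2 * u4 * u6 - 49 * u3 ^ 2 * u5 ^ 2 + 280 * u3 * u4 ^ 2 * u5 - 175 * u4 ^ 4) = (2*(a*z*w^3))^28 * 0 := by
    linear_combination 10*t1 - 70*t2 - 49*t3 + 280*t4 - 175*t5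
  exact mul_left_cancel₀ (pow_ne_zero 28 hD) key

set_option maxHeartbeats 4000000 in
theorem stmt18 (c d : ℝ) (hcd : c < d) (q0 q1 q2 a r s : ℝ)
    (ha : a ≠ 0) (hrs : r ≠ s) (y : ℝ → ℝ)
    (hy : ContDiffOn ℝ (⊤ : ℕ∞) y (Set.Ioo c d))
    (hcurve : ∀ x ∈ Set.Ioo c d,
      (y x + (q0 + q1 * x + q2 * x ^ 2)) ^ 2 + a * (x - r) * (x - s) ^ 3 = 0)
    (hne : ∀ x ∈ Set.Ioo c d, y x + (q0 + q1 * x + q2 * x ^ 2) ≠ 0) :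
    ∀ x ∈ Set.Ioo c d, Eode y (Set.Ioo c d) x = 0 := by
  have hSo : IsOpen (Set.Ioo c d) := isOpen_Ioo
  have hSu : UniqueDiffOn ℝ (Set.Ioo c d) := hSo.uniqueDiffOn
  have hDd : ∀ (k : ℕ), ∀ x ∈ (Set.Ioo c d), HasDerivAt (iteratedDerivWithin k y (Set.Ioo c d))
      (iteratedDerivWithin (k+1) y (Set.Ioo c d) x) x := by
    intro k x hx
    have h1 : DifferentiableOn ℝ (iteratedDerivWithin k y (Set.Ioo c d)) (Set.Ioo c d) :=
      hy.differentiableOn_iteratedDerivWithin (WithTop.coe_lt_coe.mpr (ENat.coe_lt_top k)) hSu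
    have h2 : deriv (iteratedDerivWithin k y (Set.Ioo c d)) x = iteratedDerivWithin (k+1) y (Set.Ioo c d) x := by
      rw [iteratedDerivWithin_succ]
      exact (derivWithin_of_isOpen hSo hx).symm
    exact h2 ▸ ((h1 x hx).differentiableAt (hSo.mem_nhds hx)).hasDerivAt
  -- derivative of the quadratic Q and its derivatives
  have hq : ∀ x : ℝ, HasDerivAt (fun X : ℝ => q0 + q1 * X + q2 * X ^ 2) (q1 + 2 * q2 * x) x := by
    intro x
    have h := ((hasDerivAt_const x q0).add ((hasDerivAt_id x).const_mul q1)).add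
      ((hasDerivAt_pow 2 x).const_mul q2)
    simp only [id_eq] at h
    exact h.congr_deriv (by push_cast; ring)
  have hq1 : ∀ x : ℝ, HasDerivAt (fun X : ℝ => q1 + 2 * q2 * X) (2 * q2) x := by
    intro x
    have h := (hasDerivAt_const x q1).add ((hasDerivAt_id x).const_mul (2 * q2))
    simp only [id_eq] at h
    exact h.congr_deriv (by push_cast; ring)
  have hp0 : ∀ x : ℝ, HasDerivAt (fun X : ℝ => a * ((X - r) * (X - s) ^ 3)) (a * ((x - s) ^ 3 + 3 * ((x - r) * (x - s) ^ 2))) x := by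
    intro x
    have h := (((hasDerivAt_id x).sub_const r).mul (((hasDerivAt_id x).sub_const s).pow 3)).const_mul a
    simp only [id_eq] at h
    exact h.congr_deriv (by simp only [Pi.pow_apply]; push_cast; ring)
  have hp1 : ∀ x : ℝ, HasDerivAt (fun X : ℝ => a * ((X - s) ^ 3 + 3 * ((X - r) * (X - s) ^ 2))) (a * (6 * (x - s) ^ 2 + 6 * ((x - r) * (x - s)))) x := by
    intro x
    have h := ((((hasDerivAt_id x).sub_const s).pow 3).add ((((hasDerivAt_id x).sub_const r).mul
      (((hasDerivAt_id x).sub_const s).pow 2)).const_mul 3)).const_mul a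
    simp only [id_eq] at h
    exact h.congr_deriv (by simp only [Pi.pow_apply]; push_cast; ring)
  have hp2 : ∀ x : ℝ, HasDerivAt (fun X : ℝ => a * (6 * (X - s) ^ 2 + 6 * ((X - r) * (X - s)))) (a * (18 * (x - s) + 6 * (x - r))) x := by
    intro x
    have h := (((((hasDerivAt_id x).sub_const s).pow 2).const_mul 6).add ((((hasDerivAt_id x).sub_const r).mul
      ((hasDerivAt_id x).sub_const s)).const_mul 6)).const_mul a
    simp only [id_eq] at h
    exact h.congr_deriv (by push_cast; ring)
  have hp3 : ∀ x : ℝ, HasDerivAt (fun X : ℝ => a * (18 * (X - s) + 6 * (X - r))) (24 * a) x := by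
    intro x
    have h := (((((hasDerivAt_id x).sub_const s).const_mul 18)).add (((hasDerivAt_id x).sub_const r).const_mul 6)).const_mul a
    simp only [id_eq] at h
    exact h.congr_deriv (by push_cast; ring)
  have hv0 : ∀ x ∈ (Set.Ioo c d), HasDerivAt (fun X : ℝ => (iteratedDerivWithin 0 y (Set.Ioo c d) X + (q0 + q1 * X + q2 * X ^ 2))) ((iteratedDerivWithin 1 y (Set.Ioo c d) x + (q1 + 2 * q2 * x))) x := by
    intro x hx
    exact (hDd 0 x hx).add (hq x)
  have hv1 : ∀ x ∈ (Set.Ioo c d), HasDerivAt (fun X : ℝ => (iteratedDerivWithin 1 y (Set.Ioo c d) X + (q1 + 2 * q2 * X))) ((iteratedDerivWithin 2 y (Set.Ioo c d) x + 2 * q2)) x := by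
    intro x hx
    exact (hDd 1 x hx).add (hq1 x)
  have hv2 : ∀ x ∈ (Set.Ioo c d), HasDerivAt (fun X : ℝ => (iteratedDerivWithin 2 y (Set.Ioo c d) X + 2 * q2)) (iteratedDerivWithin 3 y (Set.Ioo c d) x) x := by
    intro x hx
    exact (hDd 2 x hx).add_const (2 * q2)
  have hv3 : ∀ x ∈ (Set.Ioo c d), HasDerivAt (fun X : ℝ => iteratedDerivWithin 3 y (Set.Ioo c d) X) (iteratedDerivWithin 4 y (Set.Ioo c d) x) x := by
    intro x hx
    exact hDd 3 x hx
  have hv4 : ∀ x ∈ (Set.Ioo c d), HasDerivAt (fun X : ℝ => iteratedDerivWithin 4 y (Set.Ioo c d) X) (iteratedDerivWithin 5 y (Set.Ioo c d) x) x := by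
    intro x hx
    exact hDd 4 x hx
  have hv5 : ∀ x ∈ (Set.Ioo c d), HasDerivAt (fun X : ℝ => iteratedDerivWithin 5 y (Set.Ioo c d) X) (iteratedDerivWithin 6 y (Set.Ioo c d) x) x := by
    intro x hx
    exact hDd 5 x hx
  have hv6 : ∀ x ∈ (Set.Ioo c d), HasDerivAt (fun X : ℝ => iteratedDerivWithin 6 y (Set.Ioo c d) X) (iteratedDerivWithin 7 y (Set.Ioo c d) x) x := by
    intro x hx
    exact hDd 6 x hx
  -- step lemma
  have step : ∀ (F G : ℝ → ℝ), (∀ x ∈ (Set.Ioo c d), HasDerivAt F (G x) x) → (∀ x ∈ (Set.Ioo c d), F x = 0) →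
      (∀ x ∈ (Set.Ioo c d), G x = 0) := by
    intro F G hFG hF x hx
    have h1 : deriv F x = 0 := by
      have he : F =ᶠ[nhds x] (fun _ => (0:ℝ)) := Filter.eventuallyEq_of_mem (hSo.mem_nhds hx) hF
      rw [he.deriv_eq]
      exact deriv_const x 0
    rw [← (hFG x hx).deriv]
    exact h1
  have hR0 : ∀ x ∈ (Set.Ioo c d), (iteratedDerivWithin 0 y (Set.Ioo c d) x + (q0 + q1 * x + q2 * x ^ 2)) ^ 2 + a * ((x - r) * (x - s) ^ 3) = 0 := by
    intro x hx
    have h := hcurve x hx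
    rw [iteratedDerivWithin_zero]
    linear_combination h
  have hs0 : ∀ x ∈ (Set.Ioo c d), HasDerivAt (fun X : ℝ => (iteratedDerivWithin 0 y (Set.Ioo c d) X + (q0 + q1 * X + q2 * X ^ 2)) ^ 2 + a * ((X - r) * (X - s) ^ 3)) (2 * ((iteratedDerivWithin 0 y (Set.Ioo c d) x + (q0 + q1 * x + q2 * x ^ 2)) * (iteratedDerivWithin 1 y (Set.Ioo c d) x + (q1 + 2 * q2 * x))) + a * ((x - s) ^ 3 + 3 * ((x - r) * (x - s) ^ 2))) x := by
    intro x hx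
    have h := ((hv0 x hx).pow 2).add (hp0 x)
    exact h.congr_deriv (by push_cast; ring)
  have hR1 : ∀ x ∈ (Set.Ioo c d), 2 * ((iteratedDerivWithin 0 y (Set.Ioo c d) x + (q0 + q1 * x + q2 * x ^ 2)) * (iteratedDerivWithin 1 y (Set.Ioo c d) x + (q1 + 2 * q2 * x))) + a * ((x - s) ^ 3 + 3 * ((x - r) * (x - s) ^ 2)) = 0 := step _ _ hs0 hR0
  have hs1 : ∀ x ∈ (Set.Ioo c d), HasDerivAt (fun X : ℝ => 2 * ((iteratedDerivWithin 0 y (Set.Ioo c d) X + (q0 + q1 * X + q2 * X ^ 2)) * (iteratedDerivWithin 1 y (Set.Ioo c d) X + (q1 + 2 * q2 * X))) + a * ((X - s) ^ 3 + 3 * ((X - r) * (X - s) ^ 2))) (2 * ((iteratedDerivWithin 0 y (Set.Ioo c d) x + (q0 + q1 * x + q2 * x ^ 2)) * (iteratedDerivWithin 2 y (Set.Ioo c d) x + 2 * q2)) + 2 * ((iteratedDerivWithin 1 y (Set.Ioo c d) x + (q1 + 2 * q2 * x)) * (iteratedDerivWithin 1 y (Set.Ioo c d) x + (q1 + 2 *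 q2 * x))) + a * (6 * (x - s) ^ 2 + 6 * ((x - r) * (x - s)))) x := by
    intro x hx
    have h := ((((hv0 x hx).mul (hv1 x hx)).const_mul 2).add (hp1 x))
    exact h.congr_deriv (by push_cast; ring)
  have hR2 : ∀ x ∈ (Set.Ioo c d), 2 * ((iteratedDerivWithin 0 y (Set.Ioo c d) x + (q0 + q1 * x + q2 * x ^ 2)) * (iteratedDerivWithin 2 y (Set.Ioo c d) x + 2 * q2)) + 2 * ((iteratedDerivWithin 1 y (Set.Ioo c d) x + (q1 + 2 * q2 * x)) * (iteratedDerivWithin 1 y (Set.Ioo c d) x + (q1 + 2 * q2 * x))) + a * (6 * (x - s) ^ 2 + 6 * ((x - r) * (x - s))) = 0 := step _ _ hs1 hR1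
  have hs2 : ∀ x ∈ (Set.Ioo c d), HasDerivAt (fun X : ℝ => 2 * ((iteratedDerivWithin 0 y (Set.Ioo c d) X + (q0 + q1 * X + q2 * X ^ 2)) * (iteratedDerivWithin 2 y (Set.Ioo c d) X + 2 * q2)) + 2 * ((iteratedDerivWithin 1 y (Set.Ioo c d) X + (q1 + 2 * q2 * X)) * (iteratedDerivWithin 1 y (Set.Ioo c d) X + (q1 + 2 * q2 * X))) + a * (6 * (X - s) ^ 2 + 6 * ((X - r) * (X - s)))) (2 * ((iteratedDerivWithin 0 y (Set.Ioo c d) x + (q0 + q1 * x + q2 * x ^ 2)) * iteratedDerivWithin 3 y (Set.Ioo c d) x) + 6 * ((iteratedDerivWithin 1 y (Set.Ioo c d) x + (q1 + 2 * q2 * x)) * (iteratedDerivWithin 2 y (Set.Ioo c d) x + 2 * q2)) + a * (18 * (x - s) + 6 * (x - r))) x := by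
    intro x hx
    have h := (((((hv0 x hx).mul (hv2 x hx)).const_mul 2).add (((hv1 x hx).mul (hv1 x hx)).const_mul 2)).add (hp2 x))
    exact h.congr_deriv (by push_cast; ring)
  have hR3 : ∀ x ∈ (Set.Ioo c d), 2 * ((iteratedDerivWithin 0 y (Set.Ioo c d) x + (q0 + q1 * x + q2 * x ^ 2)) * iteratedDerivWithin 3 y (Set.Ioo c d) x) + 6 * ((iteratedDerivWithin 1 y (Set.Ioo c d) x + (q1 + 2 * q2 * x)) * (iteratedDerivWithin 2 y (Set.Ioo c d) x + 2 * q2)) + a * (18 * (x - s) + 6 * (x - r)) = 0 := step _ _ hs2 hR2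
  have hs3 : ∀ x ∈ (Set.Ioo c d), HasDerivAt (fun X : ℝ => 2 * ((iteratedDerivWithin 0 y (Set.Ioo c d) X + (q0 + q1 * X + q2 * X ^ 2)) * iteratedDerivWithin 3 y (Set.Ioo c d) X) + 6 * ((iteratedDerivWithin 1 y (Set.Ioo c d) X + (q1 + 2 * q2 * X)) * (iteratedDerivWithin 2 y (Set.Ioo c d) X + 2 * q2)) + a * (18 * (X - s) + 6 * (X - r))) (2 * ((iteratedDerivWithin 0 y (Set.Ioo c d) x + (q0 + q1 * x + q2 * x ^ 2)) * iteratedDerivWithin 4 y (Set.Ioo c d) x) + 8 * ((iteratedDerivWithin 1 y (Set.Ioo c d) x + (q1 + 2 * q2 * x)) * iteratedDerivWithin 3 y (Set.Ioo c d) x) + 6 * ((iteratedDerivWithin 2 y (Set.Ioo c d) x + 2 * q2) * (iteratedDerivWithin 2 y (Set.Ioo c d) x + 2 * q2)) + 24 * a) x := by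
    intro x hx
    have h := (((((hv0 x hx).mul (hv3 x hx)).const_mul 2).add (((hv1 x hx).mul (hv2 x hx)).const_mul 6)).add (hp3 x))
    exact h.congr_deriv (by push_cast; ring)
  have hR4 : ∀ x ∈ (Set.Ioo c d), 2 * ((iteratedDerivWithin 0 y (Set.Ioo c d) x + (q0 + q1 * x + q2 * x ^ 2)) * iteratedDerivWithin 4 y (Set.Ioo c d) x) + 8 * ((iteratedDerivWithin 1 y (Set.Ioo c d) x + (q1 + 2 * q2 * x)) * iteratedDerivWithin 3 y (Set.Ioo c d) x) + 6 * ((iteratedDerivWithin 2 y (Set.Ioo c d) x + 2 * q2) * (iteratedDerivWithin 2 y (Set.Ioo c d) x + 2 * q2)) + 24 * a = 0 := step _ _ hs3 hR3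
  have hs4 : ∀ x ∈ (Set.Ioo c d), HasDerivAt (fun X : ℝ => 2 * ((iteratedDerivWithin 0 y (Set.Ioo c d) X + (q0 + q1 * X + q2 * X ^ 2)) * iteratedDerivWithin 4 y (Set.Ioo c d) X) + 8 * ((iteratedDerivWithin 1 y (Set.Ioo c d) X + (q1 + 2 * q2 * X)) * iteratedDerivWithin 3 y (Set.Ioo c d) X) + 6 * ((iteratedDerivWithin 2 y (Set.Ioo c d) X + 2 * q2) * (iteratedDerivWithin 2 y (Set.Ioo c d) X + 2 * q2)) + 24 * a) (2 * ((iteratedDerivWithin 0 y (Set.Ioo c d) x + (q0 + q1 * x + q2 * x ^ 2)) * iteratedDerivWithin 5 y (Set.Ioo c d) x) + 10 * ((iteratedDerivWithin 1 y (Set.Ioo c d) x + (q1 + 2 * q2 * x)) * iteratedDerivWithin 4 y (Set.Ioo c d) x) + 20 * ((iteratedDerivWithin 2 y (Set.Ioo c d) x + 2 * q2) * iteratedDerivWithin 3 y (Set.Ioo c d) x)) x := by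
    intro x hx
    have h := ((((((hv0 x hx).mul (hv4 x hx)).const_mul 2).add (((hv1 x hx).mul (hv3 x hx)).const_mul 8)).add (((hv2 x hx).mul (hv2 x hx)).const_mul 6)).add (hasDerivAt_const x (24 * a)))
    exact h.congr_deriv (by push_cast; ring)
  have hR5 : ∀ x ∈ (Set.Ioo c d), 2 * ((iteratedDerivWithin 0 y (Set.Ioo c d) x + (q0 + q1 * x + q2 * x ^ 2)) * iteratedDerivWithin 5 y (Set.Ioo c d) x) + 10 * ((iteratedDerivWithin 1 y (Set.Ioo c d) x + (q1 + 2 * q2 * x)) * iteratedDerivWithin 4 y (Set.Ioo c d) x) + 20 * ((iteratedDerivWithin 2 y (Set.Ioo c d) x + 2 * q2) * iteratedDerivWithin 3 y (Set.Ioo c d) x) = 0 := step _ _ hs4 hR4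
  have hs5 : ∀ x ∈ (Set.Ioo c d), HasDerivAt (fun X : ℝ => 2 * ((iteratedDerivWithin 0 y (Set.Ioo c d) X + (q0 + q1 * X + q2 * X ^ 2)) * iteratedDerivWithin 5 y (Set.Ioo c d) X) + 10 * ((iteratedDerivWithin 1 y (Set.Ioo c d) X + (q1 + 2 * q2 * X)) * iteratedDerivWithin 4 y (Set.Ioo c d) X) + 20 * ((iteratedDerivWithin 2 y (Set.Ioo c d) X + 2 * q2) * iteratedDerivWithin 3 y (Set.Ioo c d) X)) (2 * ((iteratedDerivWithin 0 y (Set.Ioo c d) x + (q0 + q1 * x + q2 * x ^ 2)) * iteratedDerivWithin 6 y (Set.Ioo c d) x) + 12 * ((iteratedDerivWithin 1 y (Set.Ioo c d) x + (q1 + 2 * q2 * x)) * iteratedDerivWithin 5 y (Set.Ioo c d) x) + 30 * ((iteratedDerivWithin 2 y (Set.Ioo c d) x + 2 * q2) * iteratedDerivWithin 4 y (Set.Ioo c d) x) + 20 * (iteratedDerivWithin 3 y (Set.Ioo c d) x * iteratedDerivWithin 3 y (Set.Ioo c d) x)) x := by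
    intro x hx
    have h := (((((hv0 x hx).mul (hv5 x hx)).const_mul 2).add (((hv1 x hx).mul (hv4 x hx)).const_mul 10)).add (((hv2 x hx).mul (hv3 x hx)).const_mul 20))
    exact h.congr_deriv (by push_cast; ring)
  have hR6 : ∀ x ∈ (Set.Ioo c d), 2 * ((iteratedDerivWithin 0 y (Set.Ioo c d) x + (q0 + q1 * x + q2 * x ^ 2)) * iteratedDerivWithin 6 y (Set.Ioo c d) x) + 12 * ((iteratedDerivWithin 1 y (Set.Ioo c d) x + (q1 + 2 * q2 * x)) * iteratedDerivWithin 5 y (Set.Ioo c d) x) + 30 * ((iteratedDerivWithin 2 y (Set.Ioo c d) x + 2 * q2) * iteratedDerivWithin 4 y (Set.Ioo c d) x) + 20 * (iteratedDerivWithin 3 y (Set.Ioo c d) x * iteratedDerivWithin 3 y (Set.Ioo c d) x) = 0 := step _ _ hs5 hR5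
  have hs6 : ∀ x ∈ (Set.Ioo c d), HasDerivAt (fun X : ℝ => 2 * ((iteratedDerivWithin 0 y (Set.Ioo c d) X + (q0 + q1 * X + q2 * X ^ 2)) * iteratedDerivWithin 6 y (Set.Ioo c d) X) + 12 * ((iteratedDerivWithin 1 y (Set.Ioo c d) X + (q1 + 2 * q2 * X)) * iteratedDerivWithin 5 y (Set.Ioo c d) X) + 30 * ((iteratedDerivWithin 2 y (Set.Ioo c d) X + 2 * q2) * iteratedDerivWithin 4 y (Set.Ioo c d) X) + 20 * (iteratedDerivWithin 3 y (Set.Ioo c d) X * iteratedDerivWithin 3 y (Set.Ioo c d) X)) (2 * ((iteratedDerivWithin 0 y (Set.Ioo c d) x + (q0 + q1 * x + q2 * x ^ 2)) * iteratedDerivWithin 7 y (Set.Ioo c d) x) + 14 * ((iteratedDerivWithin 1 y (Set.Ioo c d) x + (q1 + 2 * q2 * x)) * iteratedDerivWithin 6 y (Set.Ioo c d) x) + 42 * ((iteratedDerivWithin 2 y (Set.Ioo c d) x + 2 * q2) * iteratedDerivWithin 5 y (Set.Ioo c d) x) + 70 * (iteratedDerivWithin 3 y (Set.Ioo c d) x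 * iteratedDerivWithin 4 y (Set.Ioo c d) x)) x := by
    intro x hx
    have h := ((((((hv0 x hx).mul (hv6 x hx)).const_mul 2).add (((hv1 x hx).mul (hv5 x hx)).const_mul 12)).add (((hv2 x hx).mul (hv4 x hx)).const_mul 30)).add (((hv3 x hx).mul (hv3 x hx)).const_mul 20))
    exact h.congr_deriv (by push_cast; ring)
  have hR7 : ∀ x ∈ (Set.Ioo c d), 2 * ((iteratedDerivWithin 0 y (Set.Ioo c d) x + (q0 + q1 * x + q2 * x ^ 2)) * iteratedDerivWithin 7 y (Set.Ioo c d) x) + 14 * ((iteratedDerivWithin 1 y (Set.Ioo c d) x + (q1 + 2 * q2 * x)) * iteratedDerivWithin 6 y (Set.Ioo c d) x) + 42 * ((iteratedDerivWithin 2 y (Set.Ioo c d) x + 2 * q2) * iteratedDerivWithin 5 y (Set.Ioo c d) x) + 70 * (iteratedDerivWithin 3 y (Set.Ioo c d) x * iteratedDerivWithin 4 y (Set.Ioo c d) x) = 0 := step _ _ hs6 hR6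
  intro x hx
  have ht : (iteratedDerivWithin 0 y (Set.Ioo c d) x + (q0 + q1 * x + q2 * x ^ 2)) ≠ 0 := by
    rw [iteratedDerivWithin_zero]
    exact hne x hx
  have halg := alg18 a (x - r) (x - s) ((iteratedDerivWithin 0 y (Set.Ioo c d) x + (q0 + q1 * x + q2 * x ^ 2))) ((iteratedDerivWithin 1 y (Set.Ioo c d) x + (q1 + 2 * q2 * x))) ((iteratedDerivWithin 2 y (Set.Ioo c d) x + 2 * q2)) (iteratedDerivWithin 3 y (Set.Ioo c d) x) (iteratedDerivWithin 4 y (Set.Ioo c d) x) (iteratedDerivWithin 5 y (Set.Ioo c d) x) (iteratedDerivWithin 6 y (Set.Ioo c d) x) (iteratedDerivWithin 7 y (Set.Ioo c d) x)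
    ht (by linear_combination hR0 x hx) (by linear_combination hR1 x hx) (by linear_combination hR2 x hx)
    (by linear_combination hR3 x hx) (by linear_combination hR4 x hx) (by linear_combination hR5 x hx)
    (by linear_combination hR6 x hx) (by linear_combination hR7 x hx)
  simp only [Eode]
  linear_combination halg
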